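/- Let N ≥ 1 be a natural number with Col(N) = Nat.log 2 N and Row(N) = N − 2^(Col N), and let P be a natural number with P < 2^(Col N). If the bit pattern of P is contained in Row(N), i.e., Nat.land P (Row N) = P, then the bit pattern of P is contained in N, i.e., Nat.land P N = P. (Requirement R2: every entry in a row whose row-number contains the pattern of an infeasible set P encodes a superset of P, so such rows can be skipped.) -/
import Mathlib

/-- Column number of a sensor combination encoded by `N`. -/
def Col (N : ℕ) : ℕ := Nat.log 2 N

/-- Row number of a sensor combination encoded by `N`. -/
def Row (N : ℕ) : ℕ := N - 2 ^ Col N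

/-- Requirement R2: every entry in a row whose row-number contains the
pattern of a set `P` encodes a superset of `P`. -/
theorem stmt_18 (N P : ℕ) (hN : 1 ≤ N) (hP : P < 2 ^ Col N)
    (hsub : Nat.land P (Row N) = P) : Nat.land P N = P := by
  have hland : ∀ a b : ℕ, Nat.land a b = a &&& b := fun _ _ => rfl
  rw [hland] at hsub ⊢
  have hle : 2 ^ Col N ≤ N := Nat.pow_log_le_self 2 (by omega)
  have hNeq : N = 2 ^ Col N + Row N := by unfold Row; omega
  apply Nat.eq_of_testBit_eq
  intro i
  have h1 := congrArg (fun x => Nat.testBit x i) hsub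
  simp only [Nat.testBit_land] at h1 ⊢
  by_cases hPi : P.testBit i
  · have hi : i < Col N := by
      by_contra h
      exact absurd (Nat.testBit_lt_two_pow (lt_of_lt_of_le hP
        (Nat.pow_le_pow_right (by norm_num) (le_of_not_gt h)))) (by simp [hPi])
    rw [hNeq, Nat.testBit_two_pow_add_gt hi]
    simpa [hPi] using h1
  · simp [hPi]
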